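/- Let B be a finite set of monomials of R = ℝ[x₁,…,xₙ] of size r connected to 1 and σ a linear form on ⟨B⁺·B⁺⟩ such that rank H_σ^{B⁺,B⁺} = rank H_σ^{B,B} = |B| = r and H_σ^{B,B} is positive semidefinite. Let Mᵢ = [H_σ^{B,B}]⁻¹ [H_σ^{xᵢB,B}], where [H_σ^{xᵢB,B}] = [σ(xᵢ·m·m')]_{m,m'∈B}. Then σ coincides on ⟨B⁺·B⁺⟩ with ∑_{j=1}^r wⱼ e_{ζⱼ} for some weights wⱼ > 0 and pairwise distinct points ζⱼ ∈ ℝⁿ; the matrices M₁,…,Mₙ have r common linearly independent eigenvectors u₁,…,u_r (identified with polynomials uⱼ ∈ ⟨B⟩ via coordinates in the basis B); and the points and weights are recovered by ζ_{j,i} = σ(xᵢ·uⱼ)/σ(uⱼ) for 1 ≤ i ≤ n, and wⱼ = σ(uⱼ)/uⱼ(ζⱼ), for 1 ≤ j ≤ r. -/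

import Mathlib

/-
Flat extension: as `rank H_σ^{B⁺,B⁺} = rank H_σ^{B,B} = r`, the columns of `H_σ^{B⁺,B⁺}` indexed
by `B` span its column space, so with `H = H_σ^{B,B}` and `h_m = (σ(x^{m+b}))_{b ∈ B}` every moment
`σ(x^{m+m'})`, `m, m' ∈ B⁺`, equals `h_mᵀ H⁻¹ h_{m'}`. Hence `Aᵢ H⁻¹ Aᵢ'` (with `Aᵢ = H_σ^{xᵢB,B}`)
is symmetric in `i, i'`, and the matrices `Mᵢ = H⁻¹ Aᵢ` commute and are self-adjoint for the inner
product defined by `H`, which is positive definite. They therefore have an `H`-orthonormal basis of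
common eigenvectors `uⱼ`, `Mᵢ uⱼ = ζ_{j,i} uⱼ`.

For the polynomial `gⱼ` with coordinates `uⱼ`, the eigen-equation reads
`σ(xᵢ x^b gⱼ) = ζ_{j,i} σ(x^b gⱼ)` for `b ∈ B`; since `B` is connected to 1 this propagates to
`σ(x^m gⱼ) = ζⱼ^m σ(gⱼ)` for all `m ∈ B⁺`. Orthonormality becomes `gⱼ(ζₖ) σ(gₖ) = δⱼₖ`, which
makes the `ζⱼ` distinct and `σ(gⱼ) ≠ 0`, and expanding `H⁻¹ = ∑ⱼ uⱼ uⱼᵀ` in `h_mᵀ H⁻¹ h_{m'}` gives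
`σ(x^{m+m'}) = ∑ⱼ σ(gⱼ)² ζⱼ^{m+m'}`: the weights are `wⱼ = σ(gⱼ)² = σ(gⱼ) / gⱼ(ζⱼ)`.
-/

open MvPolynomial Matrix

/-- A set `B` of monomials (identified with their exponent multi-indices) is
connected to 1 if it contains `1 = x^0` and every `m ≠ 1` in `B` is `xᵢ·m'`
for some variable `xᵢ` and some `m' ∈ B`. -/
def connectedTo1 {n : ℕ} (B : Finset (Fin n →₀ ℕ)) : Prop :=
  (0 : Fin n →₀ ℕ) ∈ B ∧ ∀ α ∈ B, α ≠ 0 → ∃ i : Fin n, ∃ β ∈ B, α = β + Finsupp.single i 1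

/-- `B⁺ = B ∪ x₁B ∪ ⋯ ∪ xₙB` on the level of exponents. -/
noncomputable def plusSet {n : ℕ} (B : Finset (Fin n →₀ ℕ)) : Finset (Fin n →₀ ℕ) :=
  B ∪ Finset.univ.biUnion fun i : Fin n => B.image (· + Finsupp.single i 1)

/-- The product set `B·B' = {m·m' : m ∈ B, m' ∈ B'}` on the level of exponents. -/
noncomputable def mulSet {n : ℕ} (B B' : Finset (Fin n →₀ ℕ)) : Finset (Fin n →₀ ℕ) :=
  (B ×ˢ B').image fun p => p.1 + p.2

/-- The span `⟨B⟩` of a set of monomials. -/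
noncomputable def spanMon {n : ℕ} (B : Finset (Fin n →₀ ℕ)) :
    Submodule ℝ (MvPolynomial (Fin n) ℝ) :=
  Submodule.span ℝ ((fun α => (monomial α (1 : ℝ))) '' (B : Set (Fin n →₀ ℕ)))

/-- The (truncated) Hankel matrix `[σ(m·m')]_{m ∈ B, m' ∈ B'}`. -/
noncomputable def hMat {n : ℕ} (σ : Module.Dual ℝ (MvPolynomial (Fin n) ℝ))
    (B B' : Finset (Fin n →₀ ℕ)) : Matrix ↥B ↥B' ℝ :=
  Matrix.of fun m m' => σ (monomial ((m : Fin n →₀ ℕ) + (m' : Fin n →₀ ℕ)) 1)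

/-- The shifted Hankel matrix `[σ(xᵢ·m·m')]_{m ∈ B, m' ∈ B'}`. -/
noncomputable def hMatX {n : ℕ} (σ : Module.Dual ℝ (MvPolynomial (Fin n) ℝ)) (i : Fin n)
    (B B' : Finset (Fin n →₀ ℕ)) : Matrix ↥B ↥B' ℝ :=
  Matrix.of fun m m' => σ (X i * monomial ((m : Fin n →₀ ℕ) + (m' : Fin n →₀ ℕ)) 1)

namespace MvPolynomial

variable {R τ : Type*} [CommSemiring R]

theorem X_mul_monomial (i : τ) (α : τ →₀ ℕ) (a : R) :
    X i * monomial α a = monomial (α + Finsupp.single i 1) a := by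
  rw [monomial_add_single, pow_one, mul_comm]

theorem monomial_one_mul_monomial_one (α β : τ →₀ ℕ) :
    monomial α (1 : R) * monomial β 1 = monomial (α + β) 1 := by
  rw [monomial_mul, one_mul]

theorem eval_monomial_add_single (z : τ → R) (α : τ →₀ ℕ) (i : τ) :
    eval z (monomial (α + Finsupp.single i 1) 1) = eval z (monomial α 1) * z i := by
  rw [monomial_add_single, map_mul, map_pow, eval_X, pow_one]

end MvPolynomial

namespace Matrix

variable {K : Type*} [Field K]

theorem isUnit_of_rank_eq_card {ι : Type*} [Fintype ι] [DecidableEq ι] {A : Matrix ι ι K}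
    (h : A.rank = Fintype.card ι) : IsUnit A := by
  rw [← mulVec_surjective_iff_isUnit, ← coe_mulVecLin, ← LinearMap.range_eq_top]
  exact Submodule.eq_top_of_finrank_eq (h.trans (Module.finrank_fintype_fun_eq_card K).symm)

theorem eq_mul_nonsing_inv_mul_of_rank_eq {m n ι : Type*} [Fintype m] [Fintype n] [Fintype ι]
    [DecidableEq ι] (A : Matrix m n K) (e : ι → m) (f : ι → n)
    (hA : IsUnit (A.submatrix e f)) (hrk : A.rank = Fintype.card ι) :
    A = A.submatrix id f * (A.submatrix e f)⁻¹ * A.submatrix e id := by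
  classical
  set F := A.submatrix id f
  have hrange : LinearMap.range F.mulVecLin = LinearMap.range A.mulVecLin := by
    refine Submodule.eq_of_le_of_finrank_le ?_ ?_
    · rw [range_mulVecLin, range_mulVecLin]
      exact Submodule.span_mono (Set.range_comp_subset_range f A.col)
    calc Module.finrank K (LinearMap.range A.mulVecLin) = (A.submatrix e f).rank := by
          rw [rank_of_isUnit _ hA, ← hrk]; rfl
      _ ≤ F.rank := rank_submatrix_le F e id
  have hcol (b : n) : A.col b ∈ LinearMap.range F.mulVecLin :=
    hrange ▸ ⟨Pi.single b 1, by simp⟩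
  choose c hc using hcol
  set C : Matrix ι n K := of fun k b => c b k
  have hAC : A = F * C := by
    ext a b
    exact (congrFun (hc b) a).symm
  have hC : A.submatrix e id = A.submatrix e f * C := by
    nth_rewrite 1 [hAC]
    rfl
  rw [Matrix.mul_assoc, hC, nonsing_inv_mul_cancel_left _ _ ((isUnit_iff_isUnit_det _).mp hA),
    ← hAC]

theorem linearIndependent_of_dotProduct_mulVec_eq_ite {R ι κ : Type*} [CommRing R]
    [Fintype ι] [Fintype κ] [DecidableEq κ] {H : Matrix ι ι R} {v : κ → ι → R}
    (hv : ∀ j k, v j ⬝ᵥ (H *ᵥ v k) = if j = k then 1 else 0) : LinearIndependent R v := by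
  refine Fintype.linearIndependent_iff.mpr fun c hc k => ?_
  simpa [sum_dotProduct, smul_dotProduct, hv] using congrArg (· ⬝ᵥ (H *ᵥ v k)) hc

theorem dotProduct_nonsing_inv_mulVec_eq_sum {R ι κ : Type*} [CommRing R] [Fintype ι]
    [DecidableEq ι] [Fintype κ] [DecidableEq κ] (hcard : Fintype.card κ = Fintype.card ι)
    {H : Matrix ι ι R} (v : κ → ι → R) (hv : ∀ j k, v j ⬝ᵥ (H *ᵥ v k) = if j = k then 1 else 0)
    (x y : ι → R) : x ⬝ᵥ (H⁻¹ *ᵥ y) = ∑ j, (v j ⬝ᵥ x) * (v j ⬝ᵥ y) := by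
  set W : Matrix κ ι R := of v
  have hW : W * (H * Wᵀ) = 1 := by
    ext j k
    rw [← Matrix.mul_assoc, mul_apply', one_apply, ← hv]
    exact (dotProduct_mulVec _ _ _).symm
  have hinv : H⁻¹ = Wᵀ * W := by
    refine inv_eq_right_inv ?_
    rw [← Matrix.mul_assoc]
    exact (mul_eq_one_comm_of_equiv (Fintype.equivOfCardEq hcard)).mp hW
  rw [hinv, ← mulVec_mulVec, dotProduct_mulVec, vecMul_transpose]
  rfl

end Matrix

/-- `ι → ℝ` without the sup norm, so that the inner product `⟪x, y⟫ = x ⬝ᵥ H *ᵥ y` of a positive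
definite `H` can be put on it. -/
def BarePi (ι : Type*) : Type _ := ι → ℝ

theorem Matrix.PosDef.exists_orthonormal_common_eigenvectors {ι κ : Type*} [Fintype ι]
    {r : ℕ} (hr : Fintype.card ι = r) {H : Matrix ι ι ℝ} (hH : H.PosDef)
    (N : κ → Matrix ι ι ℝ) (hsymm : ∀ i, (N i)ᵀ * H = H * N i)
    (hcomm : ∀ i i', Commute (N i) (N i')) :
    ∃ (v : Fin r → ι → ℝ) (χ : Fin r → κ → ℝ),
      (∀ j k, v j ⬝ᵥ (H *ᵥ v k) = if j = k then 1 else 0) ∧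
      ∀ j i, N i *ᵥ v j = χ j i • v j := by
  classical
  let : NormedAddCommGroup (BarePi ι) := H.toNormedAddCommGroup hH
  let : InnerProductSpace ℝ (BarePi ι) := H.toInnerProductSpace hH.posSemidef
  have : FiniteDimensional ℝ (BarePi ι) := inferInstanceAs (Module.Finite ℝ (ι → ℝ))
  have hinner (x y : BarePi ι) : inner ℝ x y = (x : ι → ℝ) ⬝ᵥ (H *ᵥ (y : ι → ℝ)) :=
    dotProduct_comm _ _
  have hNsymm (i : κ) (x y : ι → ℝ) : (N i *ᵥ x) ⬝ᵥ (H *ᵥ y) = x ⬝ᵥ (H *ᵥ (N i *ᵥ y)) := by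
    rw [dotProduct_comm, dotProduct_mulVec, ← mulVec_transpose, dotProduct_comm, mulVec_mulVec,
      hsymm, ← mulVec_mulVec]
  let T : κ → Module.End ℝ (BarePi ι) := fun i => (N i).mulVecLin
  have hT (i : κ) : (T i).IsSymmetric := fun x y =>
    (hinner _ _).trans ((hNsymm i x y).trans (hinner _ _).symm)
  have hTcomm : Pairwise fun i i' => Commute (T i) (T i') := fun i i' _ =>
    (hcomm i i').map Matrix.toLinAlgEquiv'
  have hint := LinearMap.IsSymmetric.directSum_isInternal_of_pairwise_commute hT hTcomm
  let C := hint.collectedBasis fun χ => (stdOrthonormalBasis ℝ _).toBasis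
  have hC : Orthonormal ℝ C :=
    hint.collectedBasis_orthonormal (LinearMap.IsSymmetric.orthogonalFamily_iInf_eigenspaces hT)
      fun χ => by simp [(stdOrthonormalBasis ℝ _).orthonormal]
  let := FiniteDimensional.fintypeBasisIndex C
  let e := Fintype.equivFinOfCardEq <|
    (Module.finrank_eq_card_basis C).symm.trans ((Module.finrank_fintype_fun_eq_card ℝ).trans hr)
  refine ⟨fun j => C (e.symm j), fun j => (e.symm j).1, fun j k => ?_, fun j i => ?_⟩
  · rw [← hinner, orthonormal_iff_ite.mp hC]
    simp only [Equiv.apply_eq_iff_eq]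
  · have := hint.collectedBasis_mem (fun χ => (stdOrthonormalBasis ℝ _).toBasis) (e.symm j)
    exact Module.End.mem_eigenspace_iff.mp ((Submodule.mem_iInf _).mp this i)

variable {n : ℕ}

section plusSet

variable {B : Finset (Fin n →₀ ℕ)}

theorem mem_plusSet_of_mem {b : Fin n →₀ ℕ} (hb : b ∈ B) : b ∈ plusSet B :=
  Finset.mem_union_left _ hb

theorem add_single_mem_plusSet {b : Fin n →₀ ℕ} (hb : b ∈ B) (i : Fin n) :
    b + Finsupp.single i 1 ∈ plusSet B :=
  Finset.mem_union_right _
    (Finset.mem_biUnion.mpr ⟨i, Finset.mem_univ _, Finset.mem_image_of_mem _ hb⟩)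

theorem mem_plusSet_iff {m : Fin n →₀ ℕ} :
    m ∈ plusSet B ↔ m ∈ B ∨ ∃ i, ∃ b ∈ B, m = b + Finsupp.single i 1 := by
  simp [plusSet, eq_comm]

theorem connectedTo1.eq_eval_mul {R : Type*} [CommSemiring R] (hB : connectedTo1 B)
    {y : (Fin n →₀ ℕ) → R} {z : Fin n → R}
    (hy : ∀ b ∈ B, ∀ i, b + Finsupp.single i 1 ∈ B → y (b + Finsupp.single i 1) = z i * y b)
    {b : Fin n →₀ ℕ} (hb : b ∈ B) : y b = eval z (monomial b 1) * y 0 := by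
  induction hd : b.degree using Nat.strong_induction_on generalizing b with
  | _ d ih =>
    by_cases hb0 : b = 0
    · simp [hb0]
    obtain ⟨i, β, hβ, rfl⟩ := hB.2 b hb hb0
    rw [hy β hβ i hb, ih β.degree (by simp [← hd]) hβ rfl, eval_monomial_add_single]
    ring

theorem connectedTo1.eq_eval_mul_of_mem_plusSet {R : Type*} [CommSemiring R]
    (hB : connectedTo1 B) {y : (Fin n →₀ ℕ) → R} {z : Fin n → R}
    (hy : ∀ b ∈ B, ∀ i, y (b + Finsupp.single i 1) = z i * y b)
    {m : Fin n →₀ ℕ} (hm : m ∈ plusSet B) : y m = eval z (monomial m 1) * y 0 := by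
  have hyB {b} (hb : b ∈ B) := hB.eq_eval_mul (fun b hb i _ => hy b hb i) hb
  obtain hm | ⟨i, b, hb, rfl⟩ := mem_plusSet_iff.mp hm
  · exact hyB hm
  · rw [hy b hb i, hyB hb, eval_monomial_add_single]
    ring

end plusSet

noncomputable def polyOfVec (B : Finset (Fin n →₀ ℕ)) (v : ↥B → ℝ) : MvPolynomial (Fin n) ℝ :=
  ∑ b : ↥B, v b • monomial (b : Fin n →₀ ℕ) (1 : ℝ)

noncomputable def hankelVec (σ : Module.Dual ℝ (MvPolynomial (Fin n) ℝ))
    (B : Finset (Fin n →₀ ℕ)) (m : Fin n →₀ ℕ) : ↥B → ℝ :=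
  fun b => σ (monomial (m + (b : Fin n →₀ ℕ)) 1)

theorem polyOfVec_mem_spanMon (B : Finset (Fin n →₀ ℕ)) (v : ↥B → ℝ) :
    polyOfVec B v ∈ spanMon B :=
  Submodule.sum_mem _ fun b _ => Submodule.smul_mem _ _ (Submodule.subset_span ⟨b, b.2, rfl⟩)

theorem eval_polyOfVec (B : Finset (Fin n →₀ ℕ)) (v : ↥B → ℝ) (z : Fin n → ℝ) :
    eval z (polyOfVec B v) = ∑ b : ↥B, v b * eval z (monomial (b : Fin n →₀ ℕ) 1) := by
  simp [polyOfVec, smul_eval]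

section Hankel

variable (σ : Module.Dual ℝ (MvPolynomial (Fin n) ℝ)) {B : Finset (Fin n →₀ ℕ)}

theorem hankelVec_dotProduct (m : Fin n →₀ ℕ) (v : ↥B → ℝ) :
    hankelVec σ B m ⬝ᵥ v = σ (monomial m 1 * polyOfVec B v) := by
  simp [hankelVec, polyOfVec, dotProduct, Finset.mul_sum, monomial_mul, mul_comm]

theorem hMat_mulVec_apply (v : ↥B → ℝ) (b : ↥B) :
    (hMat σ B B *ᵥ v) b = hankelVec σ B (b : Fin n →₀ ℕ) ⬝ᵥ v :=
  rfl

theorem hMatX_apply_eq_hankelVec (i : Fin n) (b : ↥B) :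
    hMatX σ i B B b = hankelVec σ B ((b : Fin n →₀ ℕ) + Finsupp.single i 1) := by
  ext c
  simp only [hMatX, hankelVec, of_apply, X_mul_monomial, add_right_comm]

theorem hMatX_mulVec_apply (i : Fin n) (v : ↥B → ℝ) (b : ↥B) :
    (hMatX σ i B B *ᵥ v) b = hankelVec σ B ((b : Fin n →₀ ℕ) + Finsupp.single i 1) ⬝ᵥ v := by
  rw [← hMatX_apply_eq_hankelVec]
  rfl

theorem dotProduct_hMat_mulVec (v w : ↥B → ℝ) :
    v ⬝ᵥ (hMat σ B B *ᵥ w) = σ (polyOfVec B v * polyOfVec B w) := by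
  conv_rhs => rw [polyOfVec, Finset.sum_mul, map_sum]
  simp only [smul_mul_assoc, map_smul, smul_eq_mul, ← hankelVec_dotProduct]
  rfl

theorem hMat_transpose (B' : Finset (Fin n →₀ ℕ)) : (hMat σ B B')ᵀ = hMat σ B' B := by
  ext
  simp [hMat, add_comm]

theorem hMatX_transpose (i : Fin n) (B' : Finset (Fin n →₀ ℕ)) :
    (hMatX σ i B B')ᵀ = hMatX σ i B' B := by
  ext
  simp [hMatX, add_comm]

theorem hMat_posSemidef (hpsd : ∀ p ∈ spanMon B, 0 ≤ σ (p ^ 2)) : (hMat σ B B).PosSemidef := by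
  refine posSemidef_iff_dotProduct_mulVec.mpr ⟨?_, fun v => ?_⟩
  · rw [IsHermitian, conjTranspose_eq_transpose_of_trivial, hMat_transpose]
  · rw [star_trivial, dotProduct_hMat_mulVec, ← sq]
    exact hpsd _ (polyOfVec_mem_spanMon B v)

theorem hMat_posDef (hpsd : ∀ p ∈ spanMon B, 0 ≤ σ (p ^ 2))
    (hrk : (hMat σ B B).rank = B.card) : (hMat σ B B).PosDef :=
  (hMat_posSemidef σ hpsd).posDef_iff_isUnit.mpr
    (isUnit_of_rank_eq_card (hrk.trans (Fintype.card_coe B).symm))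

theorem hankel_eq_hankelVec_dotProduct (hH : IsUnit (hMat σ B B))
    (hrk : (hMat σ (plusSet B) (plusSet B)).rank = B.card)
    {m m' : Fin n →₀ ℕ} (hm : m ∈ plusSet B) (hm' : m' ∈ plusSet B) :
    σ (monomial (m + m') 1) = hankelVec σ B m ⬝ᵥ ((hMat σ B B)⁻¹ *ᵥ hankelVec σ B m') := by
  set K := hMat σ (plusSet B) (plusSet B)
  let e : ↥B → ↥(plusSet B) := fun b => ⟨b, mem_plusSet_of_mem b.2⟩
  have hfac := eq_mul_nonsing_inv_mul_of_rank_eq K e e hH (hrk.trans (Fintype.card_coe B).symm)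
  have hcol : (fun b : ↥B => σ (monomial ((b : Fin n →₀ ℕ) + m') 1)) = hankelVec σ B m' :=
    funext fun b => by rw [hankelVec, add_comm]
  calc σ (monomial (m + m') 1) = K ⟨m, hm⟩ ⟨m', hm'⟩ := rfl
    _ = (K.submatrix id e * (K.submatrix e e)⁻¹ * K.submatrix e id) ⟨m, hm⟩ ⟨m', hm'⟩ :=
      congrFun (congrFun hfac _) _
    _ = hankelVec σ B m ⬝ᵥ ((hMat σ B B)⁻¹ *ᵥ hankelVec σ B m') := by
      rw [Matrix.mul_assoc, ← hcol]
      rfl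

theorem hMatX_mul_inv_mul_hMatX_comm (hH : IsUnit (hMat σ B B))
    (hrk : (hMat σ (plusSet B) (plusSet B)).rank = B.card) (i i' : Fin n) :
    hMatX σ i B B * (hMat σ B B)⁻¹ * hMatX σ i' B B
      = hMatX σ i' B B * (hMat σ B B)⁻¹ * hMatX σ i B B := by
  have hentry (i i' : Fin n) (b b' : ↥B) :
      (hMatX σ i B B * (hMat σ B B)⁻¹ * hMatX σ i' B B) b b'
        = σ (monomial (((b : Fin n →₀ ℕ) + Finsupp.single i 1)
            + ((b' : Fin n →₀ ℕ) + Finsupp.single i' 1)) 1) := by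
    have hmul (A M C : Matrix ↥B ↥B ℝ) : (A * M * C) b b' = A b ⬝ᵥ (M *ᵥ Cᵀ b') := by
      rw [Matrix.mul_assoc]
      rfl
    rw [hmul, hMatX_transpose, hMatX_apply_eq_hankelVec, hMatX_apply_eq_hankelVec,
      hankel_eq_hankelVec_dotProduct σ hH hrk (add_single_mem_plusSet b.2 i)
        (add_single_mem_plusSet b'.2 i')]
  ext b b'
  rw [hentry, hentry, add_add_add_comm, add_add_add_comm _ (Finsupp.single i' 1),
    add_comm (Finsupp.single i' 1)]

theorem commute_inv_mul_hMatX (hH : IsUnit (hMat σ B B))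
    (hrk : (hMat σ (plusSet B) (plusSet B)).rank = B.card) (i i' : Fin n) :
    Commute ((hMat σ B B)⁻¹ * hMatX σ i B B) ((hMat σ B B)⁻¹ * hMatX σ i' B B) := by
  simp only [Commute, SemiconjBy, Matrix.mul_assoc]
  rw [← Matrix.mul_assoc (hMatX σ i B B), hMatX_mul_inv_mul_hMatX_comm σ hH hrk,
    Matrix.mul_assoc]

theorem transpose_inv_mul_hMatX_mul_hMat (hH : IsUnit (hMat σ B B)) (i : Fin n) :
    ((hMat σ B B)⁻¹ * hMatX σ i B B)ᵀ * hMat σ B B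
      = hMat σ B B * ((hMat σ B B)⁻¹ * hMatX σ i B B) := by
  have hdet := (isUnit_iff_isUnit_det _).mp hH
  rw [transpose_mul, transpose_nonsing_inv, hMatX_transpose, hMat_transpose, Matrix.mul_assoc,
    nonsing_inv_mul _ hdet, Matrix.mul_one, mul_nonsing_inv_cancel_left _ _ hdet]

theorem hankelVec_add_single_dotProduct (hH : IsUnit (hMat σ B B)) {i : Fin n} {v : ↥B → ℝ} {c : ℝ}
    (hv : ((hMat σ B B)⁻¹ * hMatX σ i B B) *ᵥ v = c • v) (b : ↥B) :
    hankelVec σ B ((b : Fin n →₀ ℕ) + Finsupp.single i 1) ⬝ᵥ v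
      = c * (hankelVec σ B (b : Fin n →₀ ℕ) ⬝ᵥ v) := by
  have hA : hMatX σ i B B *ᵥ v = c • (hMat σ B B *ᵥ v) := by
    rw [← mulVec_smul, ← hv, mulVec_mulVec,
      mul_nonsing_inv_cancel_left _ _ ((isUnit_iff_isUnit_det _).mp hH)]
  simpa only [hMatX_mulVec_apply, Pi.smul_apply, smul_eq_mul, hMat_mulVec_apply]
    using congrFun hA b

variable {v : ↥B → ℝ} {ζ : Fin n → ℝ}

theorem hankelVec_dotProduct_eq_eval_mul (hH : IsUnit (hMat σ B B)) (hB : connectedTo1 B)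
    (hv : ∀ i, ((hMat σ B B)⁻¹ * hMatX σ i B B) *ᵥ v = ζ i • v) {m : Fin n →₀ ℕ} (hm : m ∈ plusSet B) :
    hankelVec σ B m ⬝ᵥ v = eval ζ (monomial m 1) * σ (polyOfVec B v) := by
  rw [hB.eq_eval_mul_of_mem_plusSet (y := fun m => hankelVec σ B m ⬝ᵥ v)
    (fun b hb i => hankelVec_add_single_dotProduct σ hH (hv i) ⟨b, hb⟩) hm,
    hankelVec_dotProduct, monomial_zero', C_1, one_mul]

theorem dotProduct_hMat_mulVec_eq_eval_mul (hH : IsUnit (hMat σ B B)) (hB : connectedTo1 B)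
    (hv : ∀ i, ((hMat σ B B)⁻¹ * hMatX σ i B B) *ᵥ v = ζ i • v) (w : ↥B → ℝ) :
    w ⬝ᵥ (hMat σ B B *ᵥ v) = eval ζ (polyOfVec B w) * σ (polyOfVec B v) := by
  calc w ⬝ᵥ (hMat σ B B *ᵥ v) = ∑ b : ↥B, w b * (hankelVec σ B b ⬝ᵥ v) := rfl
    _ = ∑ b : ↥B, w b * (eval ζ (monomial (b : Fin n →₀ ℕ) 1) * σ (polyOfVec B v)) :=
      Finset.sum_congr rfl fun b _ => by
        rw [hankelVec_dotProduct_eq_eval_mul σ hH hB hv (mem_plusSet_of_mem b.2)]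
    _ = eval ζ (polyOfVec B w) * σ (polyOfVec B v) := by
      simp only [eval_polyOfVec, Finset.sum_mul, mul_assoc]

theorem apply_X_mul_polyOfVec (hH : IsUnit (hMat σ B B)) (hB : connectedTo1 B)
    (hv : ∀ i, ((hMat σ B B)⁻¹ * hMatX σ i B B) *ᵥ v = ζ i • v) (i : Fin n) :
    σ (X i * polyOfVec B v) = ζ i * σ (polyOfVec B v) := by
  have := hankelVec_dotProduct_eq_eval_mul σ hH hB hv (add_single_mem_plusSet hB.1 i)
  rwa [hankelVec_dotProduct, zero_add, ← X, eval_X] at this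

end Hankel

theorem hankel_eq_sum_eval (σ : Module.Dual ℝ (MvPolynomial (Fin n) ℝ))
    {B : Finset (Fin n →₀ ℕ)} {κ : Type*} [Fintype κ] [DecidableEq κ] (hB : connectedTo1 B)
    (hH : IsUnit (hMat σ B B)) (hrk : (hMat σ (plusSet B) (plusSet B)).rank = B.card)
    (hκ : Fintype.card κ = B.card) {v : κ → ↥B → ℝ} {ζ : κ → Fin n → ℝ}
    (hon : ∀ j k, v j ⬝ᵥ (hMat σ B B *ᵥ v k) = if j = k then 1 else 0)
    (heig : ∀ j i, ((hMat σ B B)⁻¹ * hMatX σ i B B) *ᵥ v j = ζ j i • v j)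
    {m m' : Fin n →₀ ℕ} (hm : m ∈ plusSet B) (hm' : m' ∈ plusSet B) :
    σ (monomial (m + m') 1)
      = ∑ j, σ (polyOfVec B (v j)) ^ 2 * eval (ζ j) (monomial (m + m') 1) := by
  rw [hankel_eq_hankelVec_dotProduct σ hH hrk hm hm',
    dotProduct_nonsing_inv_mulVec_eq_sum (hκ.trans (Fintype.card_coe B).symm) v hon]
  refine Finset.sum_congr rfl fun j _ => ?_
  rw [dotProduct_comm, hankelVec_dotProduct_eq_eval_mul σ hH hB (heig j) hm, dotProduct_comm,
    hankelVec_dotProduct_eq_eval_mul σ hH hB (heig j) hm', ← monomial_one_mul_monomial_one,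
    map_mul]
  ring

/-- under the flat extension condition with `H_σ^{B,B} ⪰ 0`, `σ` coincides
on `⟨B⁺·B⁺⟩` with `∑ⱼ wⱼ e_{ζⱼ}` for positive weights and distinct real points; the
matrices `Mᵢ = [H_σ^{B,B}]⁻¹[H_σ^{xᵢB,B}]` have `r` common linearly independent
eigenvectors `uⱼ` (coordinate vectors of polynomials `uⱼ ∈ ⟨B⟩` in the basis `B`), with
`Mᵢ uⱼ = ζ_{j,i} uⱼ`, and the points and weights are recovered by
`ζ_{j,i} = σ(xᵢ uⱼ)/σ(uⱼ)` and `wⱼ = σ(uⱼ)/uⱼ(ζⱼ)`. -/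
theorem stmt11 (n r : ℕ) (B : Finset (Fin n →₀ ℕ)) (hB : connectedTo1 B)
    (hcard : B.card = r)
    (σ : Module.Dual ℝ (MvPolynomial (Fin n) ℝ))
    (hrk1 : (hMat σ (plusSet B) (plusSet B)).rank = r)
    (hrk2 : (hMat σ B B).rank = r)
    (hpsd : ∀ p ∈ spanMon B, 0 ≤ σ (p ^ 2)) :
    ∃ (w : Fin r → ℝ) (ζ : Fin r → (Fin n → ℝ)) (u : Fin r → (↥B → ℝ)),
      (∀ j, 0 < w j) ∧ Function.Injective ζ ∧
      (∀ α ∈ mulSet (plusSet B) (plusSet B),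
        σ (monomial α 1) = ∑ j, w j * MvPolynomial.eval (ζ j) (monomial α (1 : ℝ))) ∧
      LinearIndependent ℝ u ∧
      (∀ (i : Fin n) (j : Fin r),
        ((hMat σ B B)⁻¹ * hMatX σ i B B).mulVec (u j) = ζ j i • u j) ∧
      (∀ (j : Fin r) (g : MvPolynomial (Fin n) ℝ),
        g = ∑ α : ↥B, u j α • monomial (α : Fin n →₀ ℕ) (1 : ℝ) →
        (∀ i : Fin n, ζ j i = σ (X i * g) / σ g) ∧
        w j = σ g / MvPolynomial.eval (ζ j) g) := by
  subst hcard
  have hH : (hMat σ B B).PosDef := hMat_posDef σ hpsd hrk2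
  obtain ⟨v, ζ, hon, heig⟩ := hH.exists_orthonormal_common_eigenvectors (Fintype.card_coe B) _
    (transpose_inv_mul_hMatX_mul_hMat σ hH.isUnit) (commute_inv_mul_hMatX σ hH.isUnit hrk1)
  have hδ (j k : Fin B.card) :
      eval (ζ k) (polyOfVec B (v j)) * σ (polyOfVec B (v k)) = if j = k then 1 else 0 := by
    rw [← dotProduct_hMat_mulVec_eq_eval_mul σ hH.isUnit hB (heig k), hon]
  have hne (j : Fin B.card) : eval (ζ j) (polyOfVec B (v j)) ≠ 0 ∧ σ (polyOfVec B (v j)) ≠ 0 :=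
    mul_ne_zero_iff.mp (by simp [hδ])
  refine ⟨fun j => σ (polyOfVec B (v j)) ^ 2, ζ, v, fun j => pow_two_pos_of_ne_zero (hne j).2,
    fun j k hζ => ?_, fun α hα => ?_, linearIndependent_of_dotProduct_mulVec_eq_ite hon,
    fun i j => heig j i, fun j g hg => ?_⟩
  · by_contra hjk
    have := hδ j k
    rw [if_neg hjk, ← hζ] at this
    exact mul_ne_zero (hne j).1 (hne k).2 this
  · obtain ⟨⟨m, m'⟩, hmm, rfl⟩ := Finset.mem_image.mp hα
    obtain ⟨hm, hm'⟩ := Finset.mem_product.mp hmm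
    exact hankel_eq_sum_eval σ hB hH.isUnit hrk1 (Fintype.card_fin _) hon heig hm hm'
  · obtain rfl : g = polyOfVec B (v j) := hg
    refine ⟨fun i => ?_, ?_⟩
    · rw [apply_X_mul_polyOfVec σ hH.isUnit hB (heig j), mul_div_cancel_right₀ _ (hne j).2]
    · have h1 : eval (ζ j) (polyOfVec B (v j)) * σ (polyOfVec B (v j)) = 1 := by simpa using hδ j j
      rw [eq_div_iff (hne j).1]
      linear_combination σ (polyOfVec B (v j)) * h1
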